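/- arXiv:1001.0289 — 7 statements merged into one kernel-verified Lean document; each statement's English description precedes it below -/
import Mathlib

section
/- Let x ∈ X with I(x) = {i_1 < … < i_s}, let x' ∈ X and g, g' ∈ (ℤ/2)^m. Then (x, g) and (x', g') represent the same point of the glue-back construction M(X, λ) if and only if there exist ε_1, …, ε_s ∈ {0, 1} such that x' = τ_{i_s}^{ε_s}(⋯(τ_{i_1}^{ε_1}(x))⋯) and g' = g + ε_1·λ(i_1) + ⋯ + ε_s·λ(i_s). (In particular, if (x, g) ∼ (x', g') then x' is a duplicate point of x.) -/
open Set Relation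

/-- An involutive panel structure on a topological space `X` with `k` panels. -/
structure PanelStructure (X : Type*) [TopologicalSpace X] (k : ℕ) where
  P : Fin k → Set X
  isClosed : ∀ i, IsClosed (P i)
  τ : Fin k → X → X
  continuousOn : ∀ i, ContinuousOn (τ i) (P i)
  mapsTo : ∀ i, Set.MapsTo (τ i) (P i) (P i)
  invol : ∀ i, ∀ x ∈ P i, τ i (τ i x) = x
  interMapsTo : ∀ i j, Set.MapsTo (τ i) (P i ∩ P j) (P i ∩ P j)
  comm : ∀ i j, ∀ x ∈ P i ∩ P j, τ i (τ j x) = τ j (τ i x)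

/-- The additive group `(ℤ/2)^m`, with the discrete topology. -/
abbrev Z2 (m : ℕ) : Type := Fin m → ZMod 2

instance (m : ℕ) : TopologicalSpace (Z2 m) := ⊥
instance (m : ℕ) : DiscreteTopology (Z2 m) := ⟨rfl⟩

variable {X : Type*} [TopologicalSpace X] {k m : ℕ}

/-- The basic gluing relation `(x, g) ∼ (τᵢ x, g + λ i)` for `x ∈ Pᵢ`. -/
def glueRel (S : PanelStructure X k) {G : Type*} [AddGroup G] (lam : Fin k → G)
    (p q : X × G) : Prop :=
  ∃ i, p.1 ∈ S.P i ∧ q.1 = S.τ i p.1 ∧ q.2 = p.2 + lam i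

/-- The equivalence relation generated by the gluing relation. -/
def glueSetoid (S : PanelStructure X k) {G : Type*} [AddGroup G] (lam : Fin k → G) :
    Setoid (X × G) :=
  EqvGen.setoid (glueRel S lam)

/-- The glue-back construction `M(X, λ)`, as a quotient of `X × G`
(with `G` carrying its own topology, discrete in the case `G = Z2 m`). -/
abbrev GlueBack (S : PanelStructure X k) {G : Type*} [AddGroup G] (lam : Fin k → G) :
    Type _ :=
  Quotient (glueSetoid S lam)

/-- The class `[(x, g)]` in the glue-back construction. -/
abbrev glueMk (S : PanelStructure X k) {G : Type*} [AddGroup G] (lam : Fin k → G)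
    (x : X) (g : G) : GlueBack S lam :=
  Quotient.mk (glueSetoid S lam) (x, g)

theorem eqvGen_map_of_map {α : Type*} {r : α → α → Prop} (f : α → α)
    (hf : ∀ a b, r a b → r (f a) (f b)) :
    ∀ {a b : α}, EqvGen r a b → EqvGen r (f a) (f b) := by
  intro a b h
  induction h with
  | rel a b h => exact EqvGen.rel _ _ (hf _ _ h)
  | refl a => exact EqvGen.refl _
  | symm a b _ ih => exact EqvGen.symm _ _ ih
  | trans a b c _ _ ih₁ ih₂ => exact EqvGen.trans _ _ _ ih₁ ih₂

theorem glueRel_add (S : PanelStructure X k) {G : Type*} [AddGroup G] (lam : Fin k → G)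
    (g : G) (a b : X × G) (h : glueRel S lam a b) :
    glueRel S lam (a.1, g + a.2) (b.1, g + b.2) := by
  obtain ⟨i, h₁, h₂, h₃⟩ := h
  exact ⟨i, h₁, h₂, by rw [h₃, add_assoc]⟩

/-- The natural action of `G` on the glue-back construction:
`g · [(x, g₀)] = [(x, g + g₀)]`. -/
def glueAct (S : PanelStructure X k) {G : Type*} [AddGroup G] (lam : Fin k → G) (g : G) :
    GlueBack S lam → GlueBack S lam :=
  Quotient.map (fun p => (p.1, g + p.2))
    (fun a b (hab : EqvGen (glueRel S lam) a b) =>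
      show EqvGen (glueRel S lam) _ _ from
        eqvGen_map_of_map (fun p => (p.1, g + p.2)) (glueRel_add S lam g) hab)

theorem glueAct_mk (S : PanelStructure X k) {G : Type*} [AddGroup G] (lam : Fin k → G)
    (g : G) (x : X) (g₀ : G) :
    glueAct S lam g (glueMk S lam x g₀) = glueMk S lam x (g + g₀) := rfl

theorem glueAct_zero (S : PanelStructure X k) {G : Type*} [AddGroup G] (lam : Fin k → G)
    (p : GlueBack S lam) : glueAct S lam 0 p = p := by
  induction p using Quotient.ind with
  | _ a =>
    show Quotient.mk _ (a.1, 0 + a.2) = Quotient.mk _ a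
    rw [zero_add]

theorem glueAct_add (S : PanelStructure X k) {G : Type*} [AddGroup G] (lam : Fin k → G)
    (g h : G) (p : GlueBack S lam) :
    glueAct S lam (g + h) p = glueAct S lam g (glueAct S lam h p) := by
  induction p using Quotient.ind with
  | _ a =>
    show Quotient.mk _ (a.1, (g + h) + a.2) = Quotient.mk _ (a.1, g + (h + a.2))
    rw [add_assoc]

/-- Iterated application of the involutions:
`τ_{i_s}^{ε_s} ∘ ⋯ ∘ τ_{i_1}^{ε_1}` with the indices taken in increasing order. -/
def applyPanels (S : PanelStructure X k) (ε : Fin k → Bool) (x : X) : X :=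
  (List.finRange k).foldl (fun y i => if ε i then S.τ i y else y) x

/-! Each `τ i` preserves the set `I(x)` of panels containing `x`, and the `τ i` with `i ∈ I(x)`
commute and are involutions. Hence one more gluing step along panel `i` applied to
`(τ^ε x, g + ∑ εᵢ λᵢ)` just toggles `εᵢ` (using `λᵢ + λᵢ = 0` in `(ℤ/2)^m`), so these pairs are
closed under the gluing relation. As that relation is symmetric, its equivalence closure is its
reflexive-transitive closure, and the pairs reached from `(x, g)` are exactly those. -/

namespace PanelStructure

variable (S : PanelStructure X k)

theorem τ_mem_P_iff {i j : Fin k} {x : X} (hx : x ∈ S.P i) :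
    S.τ i x ∈ S.P j ↔ x ∈ S.P j :=
  ⟨fun h => S.invol i x hx ▸ (S.interMapsTo i j ⟨S.mapsTo i hx, h⟩).2,
    fun h => (S.interMapsTo i j ⟨hx, h⟩).2⟩

theorem ite_τ_mem_P_iff {b : Bool} {i j : Fin k} {x : X} (hx : b = true → x ∈ S.P i) :
    (if b then S.τ i x else x) ∈ S.P j ↔ x ∈ S.P j := by
  cases b
  · rfl
  · exact S.τ_mem_P_iff (hx rfl)

def foldPanels (ε : Fin k → Bool) (L : List (Fin k)) (x : X) : X :=
  L.foldl (fun y i => if ε i then S.τ i y else y) x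

variable {S}

@[simp]
theorem foldPanels_nil (ε : Fin k → Bool) (x : X) : S.foldPanels ε [] x = x := rfl

@[simp]
theorem foldPanels_cons (ε : Fin k → Bool) (i : Fin k) (L : List (Fin k)) (x : X) :
    S.foldPanels ε (i :: L) x = S.foldPanels ε L (if ε i then S.τ i x else x) := rfl

theorem foldPanels_congr {ε ε' : Fin k → Bool} {L : List (Fin k)} (h : ∀ i ∈ L, ε i = ε' i)
    (x : X) : S.foldPanels ε L x = S.foldPanels ε' L x := by
  induction L generalizing x with
  | nil => rfl
  | cons i L ih =>
    simp only [foldPanels_cons, h i List.mem_cons_self]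
    exact ih (fun j hj => h j (List.mem_cons_of_mem i hj)) _

theorem foldPanels_mem_P_iff {ε : Fin k → Bool} {x : X} (hε : ∀ i, ε i = true → x ∈ S.P i)
    (L : List (Fin k)) (j : Fin k) : S.foldPanels ε L x ∈ S.P j ↔ x ∈ S.P j := by
  induction L generalizing x with
  | nil => rfl
  | cons i L ih =>
    rw [foldPanels_cons, ih fun l hl => (S.ite_τ_mem_P_iff (hε i)).2 (hε l hl)]
    exact S.ite_τ_mem_P_iff (hε i)

theorem τ_foldPanels {ε : Fin k → Bool} {x : X} (hε : ∀ i, ε i = true → x ∈ S.P i)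
    (L : List (Fin k)) {i : Fin k} (hx : x ∈ S.P i) :
    S.τ i (S.foldPanels ε L x) = S.foldPanels ε L (S.τ i x) := by
  induction L generalizing x with
  | nil => rfl
  | cons j L ih =>
    have hjx : ε j = true → x ∈ S.P j := hε j
    have hτ : (if ε j then S.τ j (S.τ i x) else S.τ i x)
        = S.τ i (if ε j then S.τ j x else x) := by
      split_ifs with h
      · exact S.comm j i x ⟨hjx h, hx⟩
      · rfl
    rw [foldPanels_cons, foldPanels_cons, hτ]
    exact ih (fun l hl => (S.ite_τ_mem_P_iff hjx).2 (hε l hl)) ((S.ite_τ_mem_P_iff hjx).2 hx)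

theorem τ_foldPanels_eq_update {ε : Fin k → Bool} {x : X} (hε : ∀ i, ε i = true → x ∈ S.P i)
    {L : List (Fin k)} (hL : L.Nodup) {i : Fin k} (hi : i ∈ L) (hx : x ∈ S.P i) :
    S.τ i (S.foldPanels ε L x) = S.foldPanels (Function.update ε i !ε i) L x := by
  induction L generalizing x with
  | nil => cases hi
  | cons j L ih =>
    rw [List.nodup_cons] at hL
    rcases List.mem_cons.1 hi with rfl | hiL
    · have hupd : ∀ l ∈ L, ε l = Function.update ε i (!ε i) l := fun l hl =>
        (Function.update_of_ne (ne_of_mem_of_not_mem hl hL.1) _ _).symm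
      rw [foldPanels_cons, foldPanels_cons, ← foldPanels_congr hupd, Function.update_self]
      cases hεi : ε i
      · exact S.τ_foldPanels hε L hx
      · simp only [if_true, Bool.not_true, Bool.false_eq_true, if_false]
        rw [S.τ_foldPanels (fun l hl => (S.τ_mem_P_iff hx).2 (hε l hl)) L (S.mapsTo i hx),
          S.invol i x hx]
    · have hji : j ≠ i := (ne_of_mem_of_not_mem hiL hL.1).symm
      rw [foldPanels_cons, foldPanels_cons, Function.update_of_ne hji]
      exact ih (fun l hl => (S.ite_τ_mem_P_iff (hε j)).2 (hε l hl)) hL.2 hiL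
        ((S.ite_τ_mem_P_iff (hε j)).2 hx)

theorem applyPanels_eq_foldPanels (ε : Fin k → Bool) (x : X) :
    applyPanels S ε x = S.foldPanels ε (List.finRange k) x := rfl

end PanelStructure

open PanelStructure

section AddGroup

variable {G : Type*} [AddGroup G] (S : PanelStructure X k) (lam : Fin k → G)

theorem glueRel_symm (hlam : ∀ i, lam i + lam i = 0) {p q : X × G} (h : glueRel S lam p q) :
    glueRel S lam q p := by
  obtain ⟨i, hp, hq₁, hq₂⟩ := h
  refine ⟨i, hq₁ ▸ S.mapsTo i hp, by rw [hq₁, S.invol i _ hp], ?_⟩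
  rw [hq₂, add_assoc, hlam, add_zero]

theorem reflTransGen_glueRel_foldPanels {ε : Fin k → Bool} {x : X}
    (hε : ∀ i, ε i = true → x ∈ S.P i) (L : List (Fin k)) (g : G) :
    ReflTransGen (glueRel S lam) (x, g)
      (S.foldPanels ε L x, g + (L.map fun i => if ε i then lam i else 0).sum) := by
  induction L generalizing x g with
  | nil => simpa using ReflTransGen.refl
  | cons i L ih =>
    rw [foldPanels_cons, List.map_cons, List.sum_cons, ← add_assoc]
    cases hεi : ε i
    · simpa using ih hε g
    · refine .head (b := (S.τ i x, g + lam i)) ⟨i, hε i hεi, rfl, rfl⟩ ?_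
      simpa using ih (fun j hj => (S.τ_mem_P_iff (hε i hεi)).2 (hε j hj)) (g + lam i)

end AddGroup

section AddCommGroup

variable {G : Type*} [AddCommGroup G] (S : PanelStructure X k) (lam : Fin k → G)

def IsPanelImage (p q : X × G) : Prop :=
  ∃ ε : Fin k → Bool, (∀ i, ε i = true → p.1 ∈ S.P i) ∧
    q.1 = applyPanels S ε p.1 ∧
    q.2 = p.2 + ∑ i : Fin k, (if ε i then lam i else 0)

theorem sum_ite_update_not (hlam : ∀ i, lam i + lam i = 0) (ε : Fin k → Bool) (i : Fin k) :
    ∑ j, (if Function.update ε i (!ε i) j then lam j else 0)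
      = (∑ j, if ε j then lam j else 0) + lam i := by
  rw [← Finset.add_sum_erase _ _ (Finset.mem_univ i),
    ← Finset.add_sum_erase _ _ (Finset.mem_univ i), Function.update_self,
    Finset.sum_congr rfl fun j hj => by rw [Function.update_of_ne (Finset.ne_of_mem_erase hj)]]
  cases ε i <;> simp only [Bool.not_false, Bool.not_true, if_true, Bool.false_eq_true, if_false,
    zero_add]
  · exact add_comm _ _
  · rw [add_right_comm, hlam, zero_add]

theorem isPanelImage_of_reflTransGen (hlam : ∀ i, lam i + lam i = 0) {p q : X × G}
    (h : ReflTransGen (glueRel S lam) p q) : IsPanelImage S lam p q := by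
  induction h with
  | refl =>
    exact ⟨fun _ => false, by simp, by simp [applyPanels_eq_foldPanels, foldPanels], by simp⟩
  | tail _ hqr ih =>
    obtain ⟨ε, hε, hq₁, hq₂⟩ := ih
    obtain ⟨i, hqi, hr₁, hr₂⟩ := hqr
    have hpi : p.1 ∈ S.P i := by
      rwa [hq₁, applyPanels_eq_foldPanels, foldPanels_mem_P_iff hε] at hqi
    refine ⟨Function.update ε i (!ε i), fun j hj => ?_, ?_, ?_⟩
    · rcases eq_or_ne j i with rfl | hji
      · exact hpi
      · exact hε j (by rwa [Function.update_of_ne hji] at hj)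
    · rw [hr₁, hq₁, applyPanels_eq_foldPanels, applyPanels_eq_foldPanels,
        τ_foldPanels_eq_update hε (List.nodup_finRange k) (List.mem_finRange i) hpi]
    · rw [hr₂, hq₂, sum_ite_update_not lam hlam, add_assoc]

theorem reflTransGen_glueRel_iff (hlam : ∀ i, lam i + lam i = 0) {p q : X × G} :
    ReflTransGen (glueRel S lam) p q ↔ IsPanelImage S lam p q := by
  refine ⟨isPanelImage_of_reflTransGen S lam hlam, ?_⟩
  rintro ⟨ε, hε, hq₁, hq₂⟩
  have := reflTransGen_glueRel_foldPanels S lam hε (List.finRange k) p.2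
  rwa [← Fin.sum_univ_def, ← applyPanels_eq_foldPanels, ← hq₁, ← hq₂] at this

end AddCommGroup

/-- `(x, g)` and `(x', g')` represent the same point of the glue-back
construction `M(X, λ)` if and only if there are `ε_1, …, ε_s ∈ {0, 1}` (indexed by the
panels containing `x`) with `x' = τ_{i_s}^{ε_s}(⋯(τ_{i_1}^{ε_1}(x))⋯)` and
`g' = g + ε_1·λ(i_1) + ⋯ + ε_s·λ(i_s)`. -/
theorem glueMk_eq_glueMk_iff (S : PanelStructure X k) (lam : Fin k → Z2 m)
    (x x' : X) (g g' : Z2 m) :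
    glueMk S lam x g = glueMk S lam x' g' ↔
      ∃ ε : Fin k → Bool, (∀ i, ε i = true → x ∈ S.P i) ∧
        x' = applyPanels S ε x ∧
        g' = g + ∑ i : Fin k, (if ε i then lam i else 0) := by
  have hlam : ∀ i, lam i + lam i = 0 := fun i => funext fun j => CharTwo.add_self_eq_zero _
  have : Std.Symm (glueRel S lam) := ⟨fun _ _ => glueRel_symm S lam hlam⟩
  calc glueMk S lam x g = glueMk S lam x' g' ↔ EqvGen (glueRel S lam) (x, g) (x', g') :=
        Quotient.eq
    _ ↔ ReflTransGen (glueRel S lam) (x, g) (x', g') := by rw [EqvGen.eqvGen_eq_reflTransGen]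
    _ ↔ _ := reflTransGen_glueRel_iff S lam hlam
end

section
/- The formula g · [(x, g₀)] = [(x, g + g₀)] (for x ∈ X and g, g₀ ∈ (ℤ/2)^m) is well defined, i.e. independent of the chosen representative (x, g₀), and determines a continuous action of the group (ℤ/2)^m on the glue-back construction M(X, λ) by homeomorphisms. -/
open Set Relation

variable {X : Type*} [TopologicalSpace X] {k m : ℕ}

section Action

variable {G : Type*} [AddGroup G] [TopologicalSpace G] [ContinuousAdd G]
  (S : PanelStructure X k) (lam : Fin k → G)

theorem continuous_glueAct (g : G) : Continuous (glueAct S lam g) :=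
  Continuous.quotient_map' (continuous_fst.prodMk (continuous_const.add continuous_snd)) _

def glueActHomeomorph (g : G) : GlueBack S lam ≃ₜ GlueBack S lam where
  toFun := glueAct S lam g
  invFun := glueAct S lam (-g)
  left_inv p := by rw [← glueAct_add, neg_add_cancel, glueAct_zero]
  right_inv p := by rw [← glueAct_add, add_neg_cancel, glueAct_zero]
  continuous_toFun := continuous_glueAct S lam g
  continuous_invFun := continuous_glueAct S lam (-g)

end Action

/-- The formula `g · [(x, g₀)] = [(x, g + g₀)]` is well defined
(independent of the representative) and determines a continuous action of `(ℤ/2)^m`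
on the glue-back construction `M(X, λ)` by homeomorphisms. -/
theorem glueBack_action_wellDefined (S : PanelStructure X k) (lam : Fin k → Z2 m) :
    ∃ A : Z2 m → GlueBack S lam → GlueBack S lam,
      (∀ (g g₀ : Z2 m) (x : X), A g (glueMk S lam x g₀) = glueMk S lam x (g + g₀)) ∧
      (∀ p : GlueBack S lam, A 0 p = p) ∧
      (∀ (g h : Z2 m) (p : GlueBack S lam), A (g + h) p = A g (A h p)) ∧
      (∀ g : Z2 m, Continuous (A g)) ∧
      (∀ g : Z2 m, IsHomeomorph (A g)) :=
  ⟨glueAct S lam, fun g g₀ x => glueAct_mk S lam g x g₀, glueAct_zero S lam, glueAct_add S lam,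
    continuous_glueAct S lam, fun g => (glueActHomeomorph S lam g).isHomeomorph⟩
end

section
/- The map X → M(X, λ)/(ℤ/2)^m sending x to the orbit of [(x, 0)] descends to a homeomorphism from the quotient X/≈ onto the orbit space of the natural (ℤ/2)^m-action on the glue-back construction M(X, λ). -/
open Set Relation

variable {X : Type*} [TopologicalSpace X] {k m : ℕ}

/-- The relation `x ≈ τᵢ(x)` on `X`. -/
def panelRel (S : PanelStructure X k) (x y : X) : Prop :=
  ∃ i, x ∈ S.P i ∧ y = S.τ i x

/-- The quotient `X/≈` of `X` by the equivalence relation generated by `x ≈ τᵢ(x)`. -/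
abbrev PanelQuot (S : PanelStructure X k) : Type _ :=
  Quotient (EqvGen.setoid (panelRel S))

/-- The orbit equivalence relation of the natural `(ℤ/2)^m`-action on `M(X, λ)`. -/
def orbitSetoid (S : PanelStructure X k) (lam : Fin k → Z2 m) :
    Setoid (GlueBack S lam) where
  r p q := ∃ g : Z2 m, glueAct S lam g p = q
  iseqv := by
    refine ⟨fun p => ⟨0, glueAct_zero S lam p⟩, ?_, ?_⟩
    · rintro p q ⟨g, rfl⟩
      refine ⟨g, ?_⟩
      rw [← glueAct_add]
      have hg : g + g = 0 := by
        funext i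
        exact (by decide : ∀ a : ZMod 2, a + a = 0) (g i)
      rw [hg, glueAct_zero]
    · rintro p q r ⟨g, rfl⟩ ⟨h, rfl⟩
      exact ⟨h + g, by rw [glueAct_add]⟩

/-- The orbit space `M(X, λ)/(ℤ/2)^m` of the natural action, with the quotient topology. -/
abbrev GlueBackOrbitSpace (S : PanelStructure X k) (lam : Fin k → Z2 m) : Type _ :=
  Quotient (orbitSetoid S lam)

/-!
The projection `X × (ℤ/2)^m → X` turns gluing steps into `≈`-steps and is constant on orbits, so
it descends to the orbit space; conversely `x ↦ [(x, 0)]` respects `≈` up to the action, because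
`[(τᵢ x, 0)] = λ(i) · [(x, 0)]` as `λ(i) + λ(i) = 0`. The two maps are mutually inverse on
representatives, and both are continuous by the universal property of quotient topologies.
-/

theorem Relation.EqvGen.apply_eq {α β : Type*} {r : α → α → Prop} {f : α → β}
    (hf : ∀ a b, r a b → f a = f b) {a b : α} (h : EqvGen r a b) : f a = f b :=
  Setoid.eqvGen_le (s := Setoid.ker f) hf h

section

variable (S : PanelStructure X k)

theorem glueMk_tau {G : Type*} [AddGroup G] (lam : Fin k → G) {i : Fin k} {x : X}
    (hx : x ∈ S.P i) (g : G) : glueMk S lam (S.τ i x) (g + lam i) = glueMk S lam x g :=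
  (Quotient.sound (EqvGen.rel _ _ ⟨i, hx, rfl, rfl⟩)).symm

theorem panelRel_of_glueRel {G : Type*} [AddGroup G] (lam : Fin k → G) {p q : X × G}
    (h : glueRel S lam p q) : panelRel S p.1 q.1 :=
  let ⟨i, hx, hq, _⟩ := h
  ⟨i, hx, hq⟩

theorem orbitMk_glueMk_tau (lam : Fin k → Z2 m) {i : Fin k} {x : X} (hx : x ∈ S.P i) :
    Quotient.mk (orbitSetoid S lam) (glueMk S lam (S.τ i x) 0) =
      Quotient.mk (orbitSetoid S lam) (glueMk S lam x 0) := by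
  have h := glueMk_tau S lam hx (lam i)
  rw [ZModModule.add_self] at h
  exact (Quotient.sound (s := orbitSetoid S lam) ⟨lam i, by rw [glueAct_mk, add_zero, h]⟩).symm

theorem orbitMk_glueMk_zero_eq (lam : Fin k → Z2 m) (x : X) (g : Z2 m) :
    Quotient.mk (orbitSetoid S lam) (glueMk S lam x 0) =
      Quotient.mk (orbitSetoid S lam) (glueMk S lam x g) :=
  Quotient.sound ⟨g, by rw [glueAct_mk, add_zero]⟩

def panelQuotToOrbitSpace (lam : Fin k → Z2 m) : PanelQuot S → GlueBackOrbitSpace S lam :=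
  Quotient.lift (fun x => Quotient.mk (orbitSetoid S lam) (glueMk S lam x 0)) fun _ _ h =>
    h.apply_eq fun _ _ ⟨_, hx, hy⟩ => hy ▸ (orbitMk_glueMk_tau S lam hx).symm

def glueBackToPanelQuot {G : Type*} [AddGroup G] (lam : Fin k → G) :
    GlueBack S lam → PanelQuot S :=
  Quotient.lift (fun p => Quotient.mk (EqvGen.setoid (panelRel S)) p.1) fun _ _ h =>
    h.apply_eq fun _ _ hpq => Quotient.sound (EqvGen.rel _ _ (panelRel_of_glueRel S lam hpq))

theorem glueBackToPanelQuot_glueAct {G : Type*} [AddGroup G] (lam : Fin k → G) (g : G)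
    (p : GlueBack S lam) :
    glueBackToPanelQuot S lam (glueAct S lam g p) = glueBackToPanelQuot S lam p := by
  induction p using Quotient.ind
  rfl

def orbitSpaceToPanelQuot (lam : Fin k → Z2 m) : GlueBackOrbitSpace S lam → PanelQuot S :=
  Quotient.lift (glueBackToPanelQuot S lam) fun p _ ⟨g, hg⟩ =>
    hg ▸ (glueBackToPanelQuot_glueAct S lam g p).symm

theorem continuous_panelQuotToOrbitSpace (lam : Fin k → Z2 m) :
    Continuous (panelQuotToOrbitSpace S lam) :=
  continuous_quotient_mk'.comp (continuous_quotient_mk'.comp (.prodMk_left 0)) |>.quotient_lift _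

theorem continuous_glueBackToPanelQuot {G : Type*} [AddGroup G] [TopologicalSpace G]
    (lam : Fin k → G) : Continuous (glueBackToPanelQuot S lam) :=
  (continuous_quotient_mk'.comp continuous_fst).quotient_lift _

theorem continuous_orbitSpaceToPanelQuot (lam : Fin k → Z2 m) :
    Continuous (orbitSpaceToPanelQuot S lam) :=
  (continuous_glueBackToPanelQuot S lam).quotient_lift _

def panelQuotHomeomorphOrbitSpace (lam : Fin k → Z2 m) :
    PanelQuot S ≃ₜ GlueBackOrbitSpace S lam where
  toFun := panelQuotToOrbitSpace S lam
  invFun := orbitSpaceToPanelQuot S lam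
  left_inv := by
    rintro ⟨x⟩
    rfl
  right_inv := by
    rintro ⟨⟨x, g⟩⟩
    exact orbitMk_glueMk_zero_eq S lam x g
  continuous_toFun := continuous_panelQuotToOrbitSpace S lam
  continuous_invFun := continuous_orbitSpaceToPanelQuot S lam

end

/-- The map `x ↦` (orbit of `[(x, 0)]`) descends to a homeomorphism from
`X/≈` onto the orbit space of the natural `(ℤ/2)^m`-action on `M(X, λ)`. -/
theorem panelQuot_homeomorph_orbitSpace (S : PanelStructure X k) (lam : Fin k → Z2 m) :
    ∃ h : PanelQuot S ≃ₜ GlueBackOrbitSpace S lam,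
      ∀ x : X, h (Quotient.mk (EqvGen.setoid (panelRel S)) x) =
        Quotient.mk (orbitSetoid S lam) (glueMk S lam x 0) :=
  ⟨panelQuotHomeomorphOrbitSpace S lam, fun _ => rfl⟩
end

section
/- Suppose X is nonempty and connected and every panel P_i is nonempty. Then the glue-back construction M(X, λ) has exactly 2^{m − rank(λ)} connected components. -/
/-!
The coset of `g` modulo the colour subgroup `L_λ = ⟨λ(1), …, λ(k)⟩` is invariant under the
gluing, so `[(x, g)] ↦ g + L_λ` is a locally constant map `M(X, λ) → G ⧸ L_λ` and separates
components. Conversely each sheet `X × {g}` is connected, and a point of the panel `Pᵢ` glues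
the sheet of `g` to the sheet of `g + λ(i)`; so the sheets of `g` and of `g + l`, `l ∈ L_λ`,
lie in one component. Over `(ℤ/2)^m` the colour subgroup is the `𝔽₂`-span of the colours,
whose quotient has `2^(m − rank λ)` elements.
-/

open Set Relation

variable {X : Type*} [TopologicalSpace X] {k m : ℕ}

section GlueBack

variable (S : PanelStructure X k) {G : Type*} [AddGroup G] (lam : Fin k → G)

abbrev colorSubgroup : AddSubgroup G := AddSubgroup.closure (range lam)

theorem glueRel_coset_eq {a b : X × G} (h : glueRel S lam a b) :
    (a.2 : G ⧸ colorSubgroup lam) = b.2 := by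
  obtain ⟨i, -, -, hb⟩ := h
  rw [hb, QuotientAddGroup.eq, neg_add_cancel_left]
  exact AddSubgroup.subset_closure (mem_range_self i)

def glueCoset : GlueBack S lam → G ⧸ colorSubgroup lam :=
  Quotient.lift (fun p => (p.2 : G ⧸ colorSubgroup lam)) fun _ _ hab =>
    Setoid.eqvGen_le (s := Setoid.ker fun p : X × G => (p.2 : G ⧸ colorSubgroup lam))
      (fun _ _ => glueRel_coset_eq S lam) hab

variable [TopologicalSpace G]

theorem isLocallyConstant_glueCoset [DiscreteTopology G] :
    IsLocallyConstant (glueCoset S lam) := fun s =>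
  isQuotientMap_quotient_mk'.isOpen_preimage.1
    ((isOpen_discrete ((↑) ⁻¹' s : Set G)).preimage continuous_snd)

theorem continuous_glueMk (g : G) : Continuous fun x : X => glueMk S lam x g :=
  continuous_quotient_mk'.comp (continuous_id.prodMk continuous_const)

theorem connectedComponentsMk_glueMk_eq [PreconnectedSpace X] (x y : X) (g : G) :
    ConnectedComponents.mk (glueMk S lam x g) = ConnectedComponents.mk (glueMk S lam y g) :=
  ConnectedComponents.coe_eq_coe'.2 <|
    (isPreconnected_univ.image _ (continuous_glueMk S lam g).continuousOn
      |>.subset_connectedComponent ⟨y, trivial, rfl⟩ ⟨x, trivial, rfl⟩)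

theorem connectedComponentsMk_glueMk_add_eq [PreconnectedSpace X]
    (hP : ∀ i, (S.P i).Nonempty) (x : X) (g : G) {l : G}
    (hl : l ∈ colorSubgroup lam) :
    ConnectedComponents.mk (glueMk S lam x (g + l)) =
      ConnectedComponents.mk (glueMk S lam x g) := by
  induction hl using AddSubgroup.closure_induction generalizing g with
  | mem _ hl =>
    obtain ⟨i, rfl⟩ := hl
    obtain ⟨y, hy⟩ := hP i
    have hglue : glueMk S lam y g = glueMk S lam (S.τ i y) (g + lam i) :=
      Quotient.sound (EqvGen.rel _ _ ⟨i, hy, rfl, rfl⟩)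
    rw [connectedComponentsMk_glueMk_eq S lam x (S.τ i y), ← hglue,
      connectedComponentsMk_glueMk_eq S lam y x]
  | zero => rw [add_zero]
  | add l l' _ _ ih ih' => rw [← add_assoc, ih', ih]
  | neg l _ ih => rw [← ih (g + -l), neg_add_cancel_right]

variable [DiscreteTopology G]

def componentCoset : ConnectedComponents (GlueBack S lam) → G ⧸ colorSubgroup lam :=
  Quotient.lift (s := connectedComponentSetoid _) (glueCoset S lam) fun _ _ hpq =>
    (isLocallyConstant_glueCoset S lam).apply_eq_of_isPreconnected isPreconnected_connectedComponent
      mem_connectedComponent (hpq ▸ mem_connectedComponent)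

theorem bijective_componentCoset [ConnectedSpace X] (hP : ∀ i, (S.P i).Nonempty) :
    Function.Bijective (componentCoset S lam) := by
  obtain ⟨x₀⟩ : Nonempty X := inferInstance
  constructor
  · rintro ⟨⟨x, g⟩⟩ ⟨⟨y, h⟩⟩ hgh
    obtain ⟨l, hl, rfl⟩ : ∃ l ∈ colorSubgroup lam, h = g + l :=
      ⟨-g + h, QuotientAddGroup.eq.1 hgh, (add_neg_cancel_left g h).symm⟩
    change ConnectedComponents.mk (glueMk S lam x g) = ConnectedComponents.mk (glueMk S lam y _)
    rw [connectedComponentsMk_glueMk_eq S lam y x,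
      connectedComponentsMk_glueMk_add_eq S lam hP x g hl]
  · rintro ⟨g⟩
    exact ⟨ConnectedComponents.mk (glueMk S lam x₀ g), rfl⟩

end GlueBack

theorem Submodule.span_zmod_eq_addSubgroupClosure (n : ℕ) {V : Type*} [AddCommGroup V]
    [Module (ZMod n) V] (s : Set V) : (span (ZMod n) s).toAddSubgroup = AddSubgroup.closure s :=
  le_antisymm
    (span_le (p := AddSubgroup.toZModSubmodule n (.closure s)) |>.2 AddSubgroup.subset_closure :)
    (AddSubgroup.closure_le _ |>.2 subset_span)

theorem ZMod.natCard_quotient_addSubgroupClosure (p : ℕ) [Fact p.Prime] {V : Type*}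
    [AddCommGroup V] [Module (ZMod p) V] [Finite V] (s : Set V) :
    Nat.card (V ⧸ AddSubgroup.closure s) =
      p ^ (Module.finrank (ZMod p) V - Module.finrank (ZMod p) (Submodule.span (ZMod p) s)) := by
  rw [← Submodule.span_zmod_eq_addSubgroupClosure p]
  -- the module quotient `V ⧸ N` is defined as the group quotient by `N.toAddSubgroup`
  change Nat.card (V ⧸ Submodule.span (ZMod p) s) = _
  rw [Module.natCard_eq_pow_finrank (K := ZMod p), Nat.card_zmod, Submodule.finrank_quotient]

/-- If `X` is nonempty and connected and every panel is nonempty, then the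
glue-back construction `M(X, λ)` has exactly `2^(m − rank λ)` connected components, where
`rank λ` is the `𝔽₂`-dimension of the subgroup `L_λ ≤ (ℤ/2)^m` generated by the colors
`λ(1), …, λ(k)`. -/
theorem glueBack_card_connectedComponents (S : PanelStructure X k) [ConnectedSpace X]
    (hP : ∀ i, (S.P i).Nonempty) (lam : Fin k → Z2 m) :
    Nat.card (ConnectedComponents (GlueBack S lam)) =
      2 ^ (m - Module.finrank (ZMod 2) (Submodule.span (ZMod 2) (Set.range lam))) := by
  rw [Nat.card_eq_of_bijective _ (bijective_componentCoset S lam hP),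
    ZMod.natCard_quotient_addSubgroupClosure 2, Module.finrank_fin_fun]
end

section
/- Let x ∈ X be a point such that τ_i(x) = x for every i ∈ I(x) (for instance, a point lying only in reflexive panels). Then for every g₀ ∈ (ℤ/2)^m the stabilizer of [(x, g₀)] under the natural (ℤ/2)^m-action on M(X, λ) is exactly the subgroup of (ℤ/2)^m generated by { λ(i) : i ∈ I(x) }. If moreover the vectors λ(i), i ∈ I(x), are linearly independent over 𝔽₂, then this stabilizer has order 2^{|I(x)|}. -/
/-!
If `x` is fixed by every `τᵢ` with `x ∈ Pᵢ`, then a gluing step that starts or ends over `x`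
is a loop at `x` (as `τᵢ` is an involution) that changes the group coordinate by some `λ(i)`,
`i ∈ I(x)`. Hence the coset `g₀ + ⟨λ(i) : i ∈ I(x)⟩` of the fibre over `x` is a union of
classes, and `[(x, g + g₀)] = [(x, g₀)]` forces `g` into that subgroup; conversely each
`λ(i)`, `i ∈ I(x)`, fixes `[(x, g₀)]` by a single gluing step. Over `𝔽₂` the `𝔽₂`-span is
the additive closure, and a linearly independent family spans `2^|I(x)|` vectors.
-/

open Set Relation

variable {X : Type*} [TopologicalSpace X] {k m : ℕ}

theorem EqvGen.iff_of_rel_iff {α : Type*} {r : α → α → Prop} (A : α → Prop)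
    (h : ∀ a b, r a b → (A a ↔ A b)) {a b : α} (hab : EqvGen r a b) : A a ↔ A b :=
  (Equivalence.eqvGen_iff (r := fun a b => A a ↔ A b) ⟨fun _ => Iff.rfl, Iff.symm, Iff.trans⟩).1
    (Relation.EqvGen.eqvGen_mono h _ _ hab)

theorem Submodule.coe_span_zmod_eq_addSubgroupClosure {M : Type*} [AddCommGroup M] (n : ℕ)
    [Module (ZMod n) M] (s : Set M) :
    (span (ZMod n) s : Set M) = AddSubgroup.closure s :=
  calc (span (ZMod n) s : Set M) = span ℤ s :=
        congrArg SetLike.coe (restrictScalars_span ℤ (ZMod n) ZMod.intCast_surjective s)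
    _ = AddSubgroup.closure s := by rw [← span_int_eq_addSubgroupClosure]; rfl

theorem LinearIndependent.natCard_span {K V ι : Type*} [Field K] [Finite K] [AddCommGroup V]
    [Module K V] [Finite ι] {v : ι → V} (hv : LinearIndependent K v) :
    Nat.card (Submodule.span K (Set.range v)) = Nat.card K ^ Nat.card ι := by
  have := Fintype.ofFinite ι
  have := FiniteDimensional.span_of_finite K (Set.finite_range v)
  rw [Module.natCard_eq_pow_finrank (K := K), finrank_span_eq_card hv,
    Nat.card_eq_fintype_card (α := ι)]

instance (S : PanelStructure X k) {G : Type*} [AddGroup G] (lam : Fin k → G) :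
    AddAction G (GlueBack S lam) where
  vadd := glueAct S lam
  zero_vadd := glueAct_zero S lam
  add_vadd := glueAct_add S lam

section FixedPoint

variable (S : PanelStructure X k) {G : Type*} [AddCommGroup G] (lam : Fin k → G) {x : X}
  (hx : ∀ i, x ∈ S.P i → S.τ i x = x)
include hx

theorem exists_mem_panel_of_glueRel {p q : X × G} (hpq : glueRel S lam p q)
    (hend : p.1 = x ∨ q.1 = x) :
    ∃ i, x ∈ S.P i ∧ p.1 = x ∧ q.1 = x ∧ q.2 = p.2 + lam i := by
  obtain ⟨i, hp, hq, hq₂⟩ := hpq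
  have hxi : x ∈ S.P i := by
    rcases hend with h | h
    · exact h ▸ hp
    · exact h ▸ hq ▸ S.mapsTo i hp
  have hp' : p.1 = x := by
    rcases hend with h | h
    · exact h
    · rw [← S.invol i _ hp, ← hq, h, hx i hxi]
  exact ⟨i, hxi, hp', by rw [hq, hp', hx i hxi], hq₂⟩

theorem glueRel_fiber_coset_iff {H : AddSubgroup G} (hH : ∀ i, x ∈ S.P i → lam i ∈ H) (g₀ : G)
    {p q : X × G} (hpq : glueRel S lam p q) :
    (p.1 = x ∧ p.2 - g₀ ∈ H) ↔ (q.1 = x ∧ q.2 - g₀ ∈ H) := by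
  constructor
  · rintro ⟨hp, hpH⟩
    obtain ⟨i, hi, -, hq, hq₂⟩ := exists_mem_panel_of_glueRel S lam hx hpq (.inl hp)
    refine ⟨hq, ?_⟩
    rw [hq₂, add_sub_right_comm]
    exact H.add_mem hpH (hH i hi)
  · rintro ⟨hq, hqH⟩
    obtain ⟨i, hi, hp, -, hq₂⟩ := exists_mem_panel_of_glueRel S lam hx hpq (.inr hq)
    refine ⟨hp, ?_⟩
    have hsub : p.2 - g₀ = q.2 - g₀ - lam i := by rw [hq₂]; abel
    rw [hsub]
    exact H.sub_mem hqH (hH i hi)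

theorem stabilizer_glueMk (g₀ : G) :
    AddAction.stabilizer G (glueMk S lam x g₀) =
      AddSubgroup.closure (lam '' {i : Fin k | x ∈ S.P i}) := by
  refine le_antisymm (fun g hg => ?_) ?_
  · have hH : ∀ i, x ∈ S.P i → lam i ∈ AddSubgroup.closure (lam '' {i : Fin k | x ∈ S.P i}) :=
      fun i hi => AddSubgroup.subset_closure ⟨i, hi, rfl⟩
    have hg' : EqvGen (glueRel S lam) (x, g + g₀) (x, g₀) := Quotient.exact hg
    have hcoset := EqvGen.iff_of_rel_iff _
      (fun _ _ hpq => glueRel_fiber_coset_iff S lam hx hH g₀ hpq) hg'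
    simpa using (hcoset.2 ⟨rfl, by simp⟩).2
  · rw [AddSubgroup.closure_le]
    rintro _ ⟨i, hi, rfl⟩
    exact Quotient.sound (.symm _ _ (.rel _ _ ⟨i, hi, (hx i hi).symm, add_comm _ _⟩))

end FixedPoint

/-- Let `x ∈ X` be a point fixed by `τᵢ` for every panel `Pᵢ` containing it
(for instance, a point lying only in reflexive panels).  Then for every `g₀` the stabilizer
of `[(x, g₀)]` under the natural `(ℤ/2)^m`-action on `M(X, λ)` is exactly the subgroup
generated by `{λ(i) : i ∈ I(x)}`; if moreover the vectors `λ(i)`, `i ∈ I(x)`, are linearly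
independent over `𝔽₂`, this stabilizer has order `2^|I(x)|`. -/
theorem glueBack_stabilizer_of_reflexive (S : PanelStructure X k) (lam : Fin k → Z2 m)
    (x : X) (hx : ∀ i, x ∈ S.P i → S.τ i x = x) :
    (∀ g₀ : Z2 m,
      {g : Z2 m | glueAct S lam g (glueMk S lam x g₀) = glueMk S lam x g₀} =
        ((Submodule.span (ZMod 2) (lam '' {i : Fin k | x ∈ S.P i}) :
          Submodule (ZMod 2) (Z2 m)) : Set (Z2 m))) ∧
    (LinearIndependent (ZMod 2) (fun i : {i : Fin k // x ∈ S.P i} => lam i) →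
      ∀ g₀ : Z2 m,
        Nat.card {g : Z2 m | glueAct S lam g (glueMk S lam x g₀) = glueMk S lam x g₀} =
          2 ^ ({i : Fin k | x ∈ S.P i}.ncard)) := by
  have hstab : ∀ g₀ : Z2 m,
      {g : Z2 m | glueAct S lam g (glueMk S lam x g₀) = glueMk S lam x g₀} =
        ((Submodule.span (ZMod 2) (lam '' {i : Fin k | x ∈ S.P i}) :
          Submodule (ZMod 2) (Z2 m)) : Set (Z2 m)) := fun g₀ => by
    rw [Submodule.coe_span_zmod_eq_addSubgroupClosure, ← stabilizer_glueMk S lam hx g₀]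
    rfl
  refine ⟨hstab, fun hli g₀ => ?_⟩
  have hrange : lam '' {i : Fin k | x ∈ S.P i} = Set.range fun i : {i // x ∈ S.P i} => lam i :=
    Set.image_eq_range _ _
  rw [hstab g₀, hrange, SetLike.coe_sort_coe, hli.natCard_span, Nat.card_zmod,
    ← Nat.card_coe_set_eq]
  rfl
end

section
/- Let H be a subgroup of (ℤ/2)^m containing λ(i) for all i = 1, …, k, and let λ_H : {1, …, k} → H denote λ with codomain restricted to H. Then θ_λ(X × H) is a closed and open subset of M(X, λ), invariant under the natural action of H, and there is an H-equivariant homeomorphism from the glue-back construction M_H(X, λ_H) (the quotient of X × H by the relation generated by (x, g) ∼ (τ_i(x), g + λ(i)) for x ∈ P_i) onto θ_λ(X × H) with its subspace topology. -/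
open Set Relation

variable {X : Type*} [TopologicalSpace X] {k m : ℕ}

/-!
Every gluing move changes the second coordinate by a colour `λ i ∈ H`, so membership of the second
coordinate in `H` is an invariant of the gluing equivalence. Hence `X × H` is saturated, and its
image `θ_λ(X × H)` is clopen because `H` is clopen in the discrete group. For the same reason a
chain of moves joining two points of `X × H` stays in `X × H`, so the map `M_H(X, λ_H) → M(X, λ)`
induced by the inclusion `X × H → X × G` is injective; it is open because `X × H` is open and
saturated, hence an open embedding with image `θ_λ(X × H)`.
-/

open Topology

section Subgroup

variable {G : Type*} [AddGroup G] (S : PanelStructure X k) (lam : Fin k → G) {H : AddSubgroup G}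

theorem mem_iff_of_eqvGen_glueRel (hH : ∀ i, lam i ∈ H) {p q : X × G}
    (h : EqvGen (glueRel S lam) p q) : p.2 ∈ H ↔ q.2 ∈ H := by
  induction h with
  | rel a b hab =>
    obtain ⟨i, -, -, hb⟩ := hab
    rw [hb, H.add_mem_cancel_right (hH i)]
  | refl => rfl
  | symm _ _ _ ih => exact ih.symm
  | trans _ _ _ _ _ ih₁ ih₂ => exact ih₁.trans ih₂

theorem eqvGen_glueRel_restrict (hH : ∀ i, lam i ∈ H) {p q : X × G}
    (h : EqvGen (glueRel S lam) p q) (hp : p.2 ∈ H) (hq : q.2 ∈ H) :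
    EqvGen (glueRel S fun i => (⟨lam i, hH i⟩ : H)) (p.1, ⟨p.2, hp⟩) (q.1, ⟨q.2, hq⟩) := by
  induction h with
  | rel a b hab =>
    obtain ⟨i, hi, hb₁, hb₂⟩ := hab
    exact EqvGen.rel _ _ ⟨i, hi, hb₁, Subtype.ext hb₂⟩
  | refl => exact EqvGen.refl _
  | symm _ _ _ ih => exact EqvGen.symm _ _ (ih hq hp)
  | trans _ b _ hab _ ih₁ ih₂ =>
    have hb : b.2 ∈ H := (mem_iff_of_eqvGen_glueRel S lam hH hab).1 hp
    exact EqvGen.trans _ _ _ (ih₁ hp hb) (ih₂ hb hq)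

theorem glueMk_eq_of_eqvGen_glueRel_restrict (hH : ∀ i, lam i ∈ H) {a b : X × H}
    (h : EqvGen (glueRel S fun i => (⟨lam i, hH i⟩ : H)) a b) :
    glueMk S lam a.1 a.2 = glueMk S lam b.1 b.2 := by
  induction h with
  | rel a b hab =>
    obtain ⟨i, hi, hb₁, hb₂⟩ := hab
    exact Quotient.sound (EqvGen.rel _ _ ⟨i, hi, hb₁, congrArg Subtype.val hb₂⟩)
  | refl => rfl
  | symm _ _ _ ih => exact ih.symm
  | trans _ _ _ _ _ ih₁ ih₂ => exact ih₁.trans ih₂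

theorem preimage_mk_image_univ_prod (hH : ∀ i, lam i ∈ H) :
    Quotient.mk (glueSetoid S lam) ⁻¹' (Quotient.mk _ '' (univ ×ˢ (H : Set G))) =
      univ ×ˢ (H : Set G) := by
  refine (subset_preimage_image _ _).antisymm' ?_
  rintro p ⟨a, ⟨-, ha⟩, hap⟩
  exact ⟨trivial, (mem_iff_of_eqvGen_glueRel S lam hH (Quotient.exact hap)).1 ha⟩

theorem mapsTo_glueAct_mk_image_univ_prod {g : G} (hg : g ∈ H) :
    MapsTo (glueAct S lam g) (Quotient.mk _ '' (univ ×ˢ (H : Set G)))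
      (Quotient.mk _ '' (univ ×ˢ (H : Set G))) := by
  rintro _ ⟨⟨x, g₀⟩, ⟨-, hg₀⟩, rfl⟩
  exact ⟨(x, g + g₀), ⟨trivial, H.add_mem hg hg₀⟩, rfl⟩

variable (hH : ∀ i, lam i ∈ H)

def glueInclusion : GlueBack S (fun i => (⟨lam i, hH i⟩ : H)) → GlueBack S lam :=
  Quotient.lift (fun p => glueMk S lam p.1 p.2) fun _ _ =>
    glueMk_eq_of_eqvGen_glueRel_restrict S lam hH

theorem glueInclusion_injective : Function.Injective (glueInclusion S lam hH) :=
  Quotient.ind₂ fun a b hab =>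
    Quotient.sound (eqvGen_glueRel_restrict S lam hH (Quotient.exact hab) a.2.2 b.2.2)

theorem range_glueInclusion :
    range (glueInclusion S lam hH) = Quotient.mk _ '' (univ ×ˢ (H : Set G)) := by
  ext p
  constructor
  · rintro ⟨q, rfl⟩
    induction q using Quotient.ind with
    | _ a => exact ⟨(a.1, a.2), ⟨trivial, a.2.2⟩, rfl⟩
  · rintro ⟨⟨x, g⟩, ⟨-, hg⟩, rfl⟩
    exact ⟨glueMk _ _ x ⟨g, hg⟩, rfl⟩

theorem glueInclusion_glueAct (h : H) (q : GlueBack S (fun i => (⟨lam i, hH i⟩ : H))) :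
    glueInclusion S lam hH (glueAct S _ h q) = glueAct S lam h (glueInclusion S lam hH q) := by
  induction q using Quotient.ind
  rfl

theorem preimage_mk_image_glueInclusion (U : Set (GlueBack S fun i => (⟨lam i, hH i⟩ : H))) :
    Quotient.mk (glueSetoid S lam) ⁻¹' (glueInclusion S lam hH '' U) =
      Prod.map id Subtype.val '' (Quotient.mk _ ⁻¹' U) := by
  ext ⟨x, g⟩
  constructor
  · rintro ⟨u, hu, hux⟩
    have hg : (x, g) ∈ Quotient.mk (glueSetoid S lam) ⁻¹' (Quotient.mk _ '' (univ ×ˢ H)) := by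
      rw [mem_preimage, ← range_glueInclusion S lam hH, ← hux]
      exact mem_range_self u
    rw [preimage_mk_image_univ_prod S lam hH] at hg
    have hu' : u = glueMk _ _ x ⟨g, hg.2⟩ := glueInclusion_injective S lam hH hux
    exact ⟨(x, ⟨g, hg.2⟩), by rwa [hu'] at hu, rfl⟩
  · rintro ⟨⟨x, g⟩, ha, hxg⟩
    cases hxg
    exact ⟨_, ha, rfl⟩

variable [TopologicalSpace G]

theorem isQuotientMap_glueSetoid_mk : IsQuotientMap (Quotient.mk (glueSetoid S lam)) :=
  isQuotientMap_quot_mk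

theorem continuous_glueInclusion : Continuous (glueInclusion S lam hH) := by
  unfold glueInclusion
  exact Continuous.quotient_lift (continuous_quot_mk.comp (by fun_prop)) _

theorem isOpenMap_glueInclusion (hHo : IsOpen (H : Set G)) :
    IsOpenMap (glueInclusion S lam hH) := by
  intro U hU
  rw [← (isQuotientMap_glueSetoid_mk S lam).isOpen_preimage,
    preimage_mk_image_glueInclusion S lam hH]
  exact IsOpenMap.id.prodMap hHo.isOpenMap_subtype_val _ (hU.preimage continuous_quot_mk)

theorem isOpen_mk_image_univ_prod (hH : ∀ i, lam i ∈ H) (hHo : IsOpen (H : Set G)) :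
    IsOpen (Quotient.mk (glueSetoid S lam) '' (univ ×ˢ (H : Set G))) := by
  rw [← (isQuotientMap_glueSetoid_mk S lam).isOpen_preimage, preimage_mk_image_univ_prod S lam hH]
  exact isOpen_univ.prod hHo

theorem isClosed_mk_image_univ_prod (hH : ∀ i, lam i ∈ H) (hHc : IsClosed (H : Set G)) :
    IsClosed (Quotient.mk (glueSetoid S lam) '' (univ ×ˢ (H : Set G))) := by
  rw [← (isQuotientMap_glueSetoid_mk S lam).isClosed_preimage,
    preimage_mk_image_univ_prod S lam hH]
  exact isClosed_univ.prod hHc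

end Subgroup

/-- Let `H` be a subgroup of `(ℤ/2)^m` containing all the colors `λ(i)`,
and let `λ_H` be `λ` with codomain restricted to `H`.  Then `θ_λ(X × H)` is a closed and
open subset of `M(X, λ)`, invariant under the natural action of `H`, and there is an
`H`-equivariant homeomorphism from the glue-back construction `M_H(X, λ_H)` onto
`θ_λ(X × H)` with its subspace topology. -/
theorem glueBack_subgroup_piece (S : PanelStructure X k) (lam : Fin k → Z2 m)
    (H : AddSubgroup (Z2 m)) (hH : ∀ i, lam i ∈ H) :
    IsClosed (Quotient.mk (glueSetoid S lam) '' (Set.univ ×ˢ (H : Set (Z2 m)))) ∧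
    IsOpen (Quotient.mk (glueSetoid S lam) '' (Set.univ ×ˢ (H : Set (Z2 m)))) ∧
    (∀ g ∈ H, ∀ p ∈ Quotient.mk (glueSetoid S lam) '' (Set.univ ×ˢ (H : Set (Z2 m))),
        glueAct S lam g p ∈
          Quotient.mk (glueSetoid S lam) '' (Set.univ ×ˢ (H : Set (Z2 m)))) ∧
    ∃ f : GlueBack S (fun i => (⟨lam i, hH i⟩ : H)) ≃ₜ
        (Quotient.mk (glueSetoid S lam) '' (Set.univ ×ˢ (H : Set (Z2 m))) :
          Set (GlueBack S lam)),
      ∀ (h : H) (q : GlueBack S (fun i => (⟨lam i, hH i⟩ : H))),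
        ((f (glueAct S (fun i => (⟨lam i, hH i⟩ : H)) h q) : GlueBack S lam)) =
          glueAct S lam (h : Z2 m) ((f q : GlueBack S lam)) := by
  have hHo : IsOpen (H : Set (Z2 m)) := isOpen_discrete _
  have hemb : IsEmbedding (glueInclusion S lam hH) :=
    (IsOpenEmbedding.of_continuous_injective_isOpenMap (continuous_glueInclusion S lam hH)
      (glueInclusion_injective S lam hH) (isOpenMap_glueInclusion S lam hH hHo)).isEmbedding
  exact ⟨isClosed_mk_image_univ_prod S lam hH (isClosed_discrete _),
    isOpen_mk_image_univ_prod S lam hH hHo,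
    fun g hg => mapsTo_glueAct_mk_image_univ_prod S lam hg,
    hemb.toHomeomorph.trans (.setCongr (range_glueInclusion S lam hH)),
    glueInclusion_glueAct S lam hH⟩
end

section
/- Let X = [0,1]² ⊆ ℝ². Define P_1 = ({0} ∪ {1}) × [0,1] with τ_1(t, y) = (1 − t, 1 − y), and P_2 = [0,1] × ({0} ∪ {1}) with τ_2(x, t) = (1 − x, 1 − t). Then (P_1, τ_1), (P_2, τ_2) is an involutive panel structure on X in which both τ_1 and τ_2 are fixed-point free involutions; yet for the (ℤ/2)²-coloring λ with λ(1) = e_1 and λ(2) = e_2 (the standard basis vectors of (ℤ/2)²), the natural (ℤ/2)²-action on the glue-back construction M(X, λ) is not free: the stabilizer of the point [((0,0), 0)] contains the nonzero element e_1 + e_2. -/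
open Set Relation

variable {X : Type*} [TopologicalSpace X] {k m : ℕ}

/-- The unit square `[0,1]² ⊆ ℝ²`. -/
def unitSquare : Set (ℝ × ℝ) := Set.Icc (0, 0) (1, 1)

/-- The corner `(0,0)` of the unit square. -/
def squareCorner : unitSquare :=
  ⟨(0, 0), Set.left_mem_Icc.mpr (by norm_num [Prod.le_def])⟩

/-- The standard basis vectors of `(ℤ/2)²`. -/
def e1 : Z2 2 := Pi.single 0 1

def e2 : Z2 2 := Pi.single 1 1

/-- The coloring `λ(1) = e₁`, `λ(2) = e₂`. -/
def squareColoring : Fin 2 → Z2 2 := ![e1, e2]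


/-! The corner `(0,0)` lies on `P₁`, and `τ₁` sends it to `(1,1)`, which lies on `P₂` and is sent
back to `(0,0)` by `τ₂`. Following this loop in `M(X, λ)` identifies `[((0,0), g)]` with
`[((0,0), g + e₁ + e₂)]`, so `e₁ + e₂` fixes that point, although each `τᵢ` is fixed-point free:
the only fixed point of `(x, y) ↦ (1 - x, 1 - y)` is the centre, which lies on no panel. -/

section Gluing

variable {X : Type*} [TopologicalSpace X] {k : ℕ} {G : Type*}

theorem glueMk_eq_of_mem [AddGroup G] (S : PanelStructure X k) (lam : Fin k → G) {i : Fin k}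
    {x : X} (hx : x ∈ S.P i) (g : G) :
    glueMk S lam x g = glueMk S lam (S.τ i x) (g + lam i) :=
  Quotient.sound (EqvGen.rel _ _ ⟨i, hx, rfl, rfl⟩)

theorem glueAct_add_glueMk_of_τ_τ_eq_self [AddCommGroup G] (S : PanelStructure X k)
    (lam : Fin k → G) {i j : Fin k} {x : X} (hi : x ∈ S.P i) (hj : S.τ i x ∈ S.P j)
    (hx : S.τ j (S.τ i x) = x) (g : G) :
    glueAct S lam (lam i + lam j) (glueMk S lam x g) = glueMk S lam x g := by
  calc glueAct S lam (lam i + lam j) (glueMk S lam x g)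
      = glueMk S lam (S.τ j (S.τ i x)) (g + lam i + lam j) := by
        rw [glueAct_mk, hx, add_comm, add_assoc]
    _ = glueMk S lam x g := by
        rw [← glueMk_eq_of_mem S lam hj, ← glueMk_eq_of_mem S lam hi]

end Gluing

def squareFlip (p : unitSquare) : unitSquare :=
  ⟨(1 - (p : ℝ × ℝ).1, 1 - (p : ℝ × ℝ).2), by
    obtain ⟨⟨h₁, h₂⟩, h₃, h₄⟩ := p.2
    exact ⟨⟨by linarith, by linarith⟩, by linarith, by linarith⟩⟩

theorem continuous_squareFlip : Continuous squareFlip :=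
  Continuous.subtype_mk (by fun_prop) _

theorem squareFlip_involutive : Function.Involutive squareFlip := fun p =>
  Subtype.ext (by simp [squareFlip])

theorem squareFlip_eq_self_iff (p : unitSquare) :
    squareFlip p = p ↔ (p : ℝ × ℝ) = (1 / 2, 1 / 2) := by
  simp only [squareFlip, Subtype.ext_iff, Prod.ext_iff]
  constructor <;> rintro ⟨h₁, h₂⟩ <;> constructor <;> linarith

def squarePanel : Fin 2 → Set unitSquare :=
  ![{p | (p : ℝ × ℝ).1 = 0 ∨ (p : ℝ × ℝ).1 = 1},
    {p | (p : ℝ × ℝ).2 = 0 ∨ (p : ℝ × ℝ).2 = 1}]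

theorem isClosed_squarePanel (i : Fin 2) : IsClosed (squarePanel i) := by
  fin_cases i <;>
    exact (isClosed_eq (by fun_prop) continuous_const).union
      (isClosed_eq (by fun_prop) continuous_const)

theorem mapsTo_squareFlip_squarePanel (i : Fin 2) :
    MapsTo squareFlip (squarePanel i) (squarePanel i) := by
  fin_cases i <;> rintro p (h | h) <;> simp [squarePanel, squareFlip, h]

theorem squareFlip_ne_self_of_mem_squarePanel {i : Fin 2} {p : unitSquare}
    (hp : p ∈ squarePanel i) : squareFlip p ≠ p := by
  rw [Ne, squareFlip_eq_self_iff, Prod.ext_iff]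
  fin_cases i <;> rcases hp with h | h <;> simp_all

def squarePanelStructure : PanelStructure unitSquare 2 where
  P := squarePanel
  isClosed := isClosed_squarePanel
  τ _ := squareFlip
  continuousOn _ := continuous_squareFlip.continuousOn
  mapsTo := mapsTo_squareFlip_squarePanel
  invol _ p _ := squareFlip_involutive p
  interMapsTo i j :=
    (mapsTo_squareFlip_squarePanel i).inter_inter (mapsTo_squareFlip_squarePanel j)
  comm _ _ _ _ := rfl

/-- On `X = [0,1]²` the two panels `P₁ = ({0} ∪ {1}) × [0,1]` with
`τ₁(t, y) = (1 − t, 1 − y)` and `τ₂(x, t) = (1 − x, 1 − t)` on `P₂ = [0,1] × ({0} ∪ {1})`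
form an involutive panel structure in which both involutions are fixed-point free; yet for
the coloring `λ(1) = e₁`, `λ(2) = e₂` the natural `(ℤ/2)²`-action on the glue-back
construction `M(X, λ)` is not free: the stabilizer of `[((0,0), 0)]` contains the nonzero
element `e₁ + e₂`. -/
theorem squareExample_not_free :
    ∃ S : PanelStructure (↥unitSquare) 2,
      S.P 0 = {p : ↥unitSquare | (p : ℝ × ℝ).1 = 0 ∨ (p : ℝ × ℝ).1 = 1} ∧
      S.P 1 = {p : ↥unitSquare | (p : ℝ × ℝ).2 = 0 ∨ (p : ℝ × ℝ).2 = 1} ∧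
      (∀ p ∈ S.P 0, (S.τ 0 p : ℝ × ℝ) = (1 - (p : ℝ × ℝ).1, 1 - (p : ℝ × ℝ).2)) ∧
      (∀ p ∈ S.P 1, (S.τ 1 p : ℝ × ℝ) = (1 - (p : ℝ × ℝ).1, 1 - (p : ℝ × ℝ).2)) ∧
      (∀ p ∈ S.P 0, S.τ 0 p ≠ p) ∧
      (∀ p ∈ S.P 1, S.τ 1 p ≠ p) ∧
      (e1 + e2 ≠ 0) ∧
      (glueAct S squareColoring (e1 + e2) (glueMk S squareColoring squareCorner 0) =
        glueMk S squareColoring squareCorner 0) ∧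
      ¬ (∀ (g : Z2 2) (p : GlueBack S squareColoring),
          glueAct S squareColoring g p = p → g = 0) := by
  have hne : e1 + e2 ≠ 0 := by decide
  have hfix : glueAct squarePanelStructure squareColoring (e1 + e2)
      (glueMk squarePanelStructure squareColoring squareCorner 0) =
        glueMk squarePanelStructure squareColoring squareCorner 0 :=
    glueAct_add_glueMk_of_τ_τ_eq_self (i := 0) (j := 1) (x := squareCorner)
      squarePanelStructure _ (Or.inl rfl) (Or.inr (sub_zero (1 : ℝ))) (squareFlip_involutive _) 0
  exact ⟨squarePanelStructure, rfl, rfl, fun _ _ => rfl, fun _ _ => rfl,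
    fun _ => squareFlip_ne_self_of_mem_squarePanel (i := 0),
    fun _ => squareFlip_ne_self_of_mem_squarePanel (i := 1),
    hne, hfix, fun hfree => hne (hfree _ _ hfix)⟩
end
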